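/- Let $\alpha > 0$ and $n \geq 1$. For cubes $I_1, I_2$ in $\mathbb{R}^n$ define $D(I_1,I_2) = \ell(I_1) + \ell(I_2) + d(I_1,I_2)$ and $A_{I_1 I_2} = \frac{\ell(I_1)^{\alpha/2}\ell(I_2)^{\alpha/2}}{D(I_1,I_2)^{n+\alpha}}|I_1|^{1/2}|I_2|^{1/2}$. Then for any nonnegative sequences $(x_I)$, $(y_I)$ indexed by dyadic cubes, $\sum_{I_1, I_2 \in \mathcal{D}} A_{I_1 I_2} x_{I_1} y_{I_2} \lesssim (\sum_{I_1} x_{I_1}^2)^{1/2}(\sum_{I_2} y_{I_2}^2)^{1/2}$, with implied constant depending only on $n$ and $\alpha$. -/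

import Mathlib

open MeasureTheory Set ENNReal

noncomputable section

/-- Index of a dyadic cube in `ℝⁿ`: a scale `k ∈ ℤ` and a lattice position. -/
abbrev Idx (n : ℕ) := ℤ × (Fin n → ℤ)

/-- The dyadic cube `∏ᵢ [mᵢ 2ᵏ, (mᵢ+1) 2ᵏ)`. -/
def dyCube (n : ℕ) (p : Idx n) : Set (EuclideanSpace ℝ (Fin n)) :=
  {x | ∀ i, (p.2 i : ℝ) * 2 ^ p.1 ≤ x i ∧ x i < ((p.2 i : ℝ) + 1) * 2 ^ p.1}

/-- Sidelength `ℓ(I) = 2ᵏ` of a dyadic cube. -/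
def sideLen {n : ℕ} (p : Idx n) : ℝ := 2 ^ p.1

/-- Distance `d(A,B)` between two sets. -/
def setDist {X : Type*} [PseudoMetricSpace X] (A B : Set X) : ℝ :=
  sInf (Set.image2 dist A B)

/-- The `k`-th dyadic ancestor `I⁽ᵏ⁾`. -/
def anc (n : ℕ) (k : ℕ) (p : Idx n) : Idx n :=
  (p.1 + k, fun i => Int.fdiv (p.2 i) (2 ^ k))

/-- `D(I₁,I₂) = ℓ(I₁) + ℓ(I₂) + d(I₁,I₂)`. -/
def Dquant (n : ℕ) (p q : Idx n) : ℝ :=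
  sideLen p + sideLen q + setDist (dyCube n p) (dyCube n q)

/-- The matrix `A_{I₁I₂} = ℓ(I₁)^{α/2} ℓ(I₂)^{α/2} D(I₁,I₂)^{-(n+α)} |I₁|^{1/2} |I₂|^{1/2}`,
where `|I| = ℓ(I)ⁿ`. -/
def Amat (n : ℕ) (α : ℝ) (p q : Idx n) : ℝ :=
  sideLen p ^ (α / 2) * sideLen q ^ (α / 2) / Dquant n p q ^ ((n : ℝ) + α)
    * (sideLen p ^ (n : ℝ)) ^ ((1 : ℝ) / 2) * (sideLen q ^ (n : ℝ)) ^ ((1 : ℝ) / 2)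

/-! ### basic geometry -/

lemma sideLen_pos {n : ℕ} (p : Idx n) : 0 < sideLen p := zpow_pos two_pos _

lemma corner_mem {n : ℕ} (p : Idx n) :
    (WithLp.toLp 2 (fun i => (p.2 i : ℝ) * 2 ^ p.1) : EuclideanSpace ℝ (Fin n)) ∈ dyCube n p := by
  intro i
  have h : (0:ℝ) < 2 ^ p.1 := zpow_pos two_pos _
  refine ⟨le_refl _, ?_⟩
  show (p.2 i : ℝ) * 2 ^ p.1 < ((p.2 i : ℝ) + 1) * 2 ^ p.1
  nlinarith

lemma dyCube_nonempty {n : ℕ} (p : Idx n) : (dyCube n p).Nonempty := ⟨_, corner_mem p⟩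

lemma abs_sub_corner_le {n : ℕ} {p : Idx n} {x : EuclideanSpace ℝ (Fin n)}
    (hx : x ∈ dyCube n p) (i : Fin n) :
    |x i - (p.2 i : ℝ) * 2 ^ p.1| ≤ sideLen p := by
  obtain ⟨h1, h2⟩ := hx i
  have h : (0:ℝ) < 2 ^ p.1 := zpow_pos two_pos _
  rw [abs_sub_le_iff]
  constructor
  · have : ((p.2 i : ℝ) + 1) * 2 ^ p.1 = (p.2 i : ℝ) * 2 ^ p.1 + 2 ^ p.1 := by ring
    rw [this] at h2
    simpa [sideLen] using (by linarith : x i - (p.2 i : ℝ) * 2 ^ p.1 ≤ 2 ^ p.1)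
  · simpa [sideLen] using (by linarith : (p.2 i : ℝ) * 2 ^ p.1 - x i ≤ 2 ^ p.1)

lemma coord_le_dist {n : ℕ} (x y : EuclideanSpace ℝ (Fin n)) (i : Fin n) :
    |x i - y i| ≤ dist x y := by
  rw [EuclideanSpace.dist_eq]
  have h1 : |x i - y i| = Real.sqrt (dist (x i) (y i) ^ 2) := by
    rw [Real.sqrt_sq dist_nonneg, Real.dist_eq]
  rw [h1]
  exact Real.sqrt_le_sqrt <| Finset.single_le_sum
    (f := fun j => dist (x j) (y j) ^ 2) (fun j _ => sq_nonneg _) (Finset.mem_univ i)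

lemma setDist_nonneg {X : Type*} [PseudoMetricSpace X] (A B : Set X) :
    0 ≤ setDist A B := by
  apply Real.sInf_nonneg
  rintro z ⟨a, ha, b, hb, rfl⟩
  exact dist_nonneg

lemma le_setDist {X : Type*} [PseudoMetricSpace X] {A B : Set X}
    (hA : A.Nonempty) (hB : B.Nonempty) {c : ℝ}
    (h : ∀ a ∈ A, ∀ b ∈ B, c ≤ dist a b) : c ≤ setDist A B := by
  obtain ⟨a0, ha0⟩ := hA
  obtain ⟨b0, hb0⟩ := hB
  apply le_csInf ⟨_, Set.mem_image2_of_mem ha0 hb0⟩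
  rintro z ⟨a, ha, b, hb, rfl⟩
  exact h a ha b hb

lemma Dquant_pos {n : ℕ} (p q : Idx n) : 0 < Dquant n p q := by
  have := setDist_nonneg (dyCube n p) (dyCube n q)
  have h1 := sideLen_pos p
  have h2 := sideLen_pos q
  unfold Dquant; linarith

lemma R_add_abs_le {n : ℕ} (p q : Idx n) (i : Fin n) :
    sideLen p + sideLen q + |(p.2 i : ℝ) * 2 ^ p.1 - (q.2 i : ℝ) * 2 ^ q.1|
      ≤ 2 * Dquant n p q := by
  have key : |(p.2 i : ℝ) * 2 ^ p.1 - (q.2 i : ℝ) * 2 ^ q.1| - (sideLen p + sideLen q)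
      ≤ setDist (dyCube n p) (dyCube n q) := by
    apply le_setDist (dyCube_nonempty p) (dyCube_nonempty q)
    intro a ha b hb
    have h1 := abs_sub_corner_le ha i
    have h2 := abs_sub_corner_le hb i
    have h3 := coord_le_dist a b i
    have t1 := abs_sub_le ((p.2 i : ℝ) * 2 ^ p.1) (a i) ((q.2 i : ℝ) * 2 ^ q.1)
    have t2 := abs_sub_le (a i) (b i) ((q.2 i : ℝ) * 2 ^ q.1)
    rw [abs_sub_comm ((p.2 i : ℝ) * 2 ^ p.1) (a i)] at t1
    linarith
  have h0 := setDist_nonneg (dyCube n p) (dyCube n q)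
  unfold Dquant at *
  set d := setDist (dyCube n p) (dyCube n q)
  have h1 := sideLen_pos p
  have h2 := sideLen_pos q
  cases abs_cases ((p.2 i : ℝ) * 2 ^ p.1 - (q.2 i : ℝ) * 2 ^ q.1) <;> linarith [key]

/-! ### tsum infrastructure -/
section tsum
open scoped ENNReal

lemma tsum_pi_prod : ∀ (N : ℕ) (f : Fin N → ℤ → ℝ≥0∞),
    ∑' m : Fin N → ℤ, ∏ i, f i (m i) = ∏ i, ∑' z : ℤ, f i z := by
  intro N
  induction N with
  | zero =>
      intro f
      rw [tsum_eq_single (fun i => i.elim0) (by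
        intro b hb
        exact absurd (funext fun i => i.elim0) (Ne.symm hb))]
      simp
  | succ N ih =>
      intro f
      rw [← (Fin.consEquiv (fun _ : Fin (N+1) => ℤ)).tsum_eq, ENNReal.tsum_prod']
      have h1 : ∀ (a : ℤ) (m : Fin N → ℤ),
          (∏ i, f i ((Fin.consEquiv (fun _ : Fin (N+1) => ℤ)) (a, m) i))
            = f 0 a * ∏ i : Fin N, f i.succ (m i) := by
        intro a m
        rw [Fin.prod_univ_succ]
        simp [Fin.consEquiv]
      calc ∑' (a : ℤ) (m : Fin N → ℤ),
            ∏ i, f i ((Fin.consEquiv (fun _ : Fin (N+1) => ℤ)) (a, m) i)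
          = ∑' (a : ℤ), f 0 a * ∑' m : Fin N → ℤ, ∏ i : Fin N, f i.succ (m i) := by
            congr 1; funext a
            rw [← ENNReal.tsum_mul_left]
            congr 1; funext m; rw [h1]
        _ = (∑' a : ℤ, f 0 a) * ∏ i : Fin N, ∑' z : ℤ, f i.succ z := by
            rw [ih, ENNReal.tsum_mul_right]
        _ = ∏ i, ∑' z : ℤ, f i z := by rw [Fin.prod_univ_succ]

/-- `a * b ≤ a ^ 2 + b ^ 2` in `ℝ≥0∞`. -/
lemma ennreal_mul_le_sq_add_sq (a b : ℝ≥0∞) : a * b ≤ a ^ 2 + b ^ 2 := by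
  rcases le_total a b with h | h
  · calc a * b ≤ b * b := mul_le_mul_left h b
      _ = b ^ 2 := (sq b).symm
      _ ≤ _ := le_add_self
  · calc a * b ≤ a * a := mul_le_mul_right h a
      _ = a ^ 2 := (sq a).symm
      _ ≤ _ := le_self_add

/-- weighted AM-GM in `ℝ≥0∞`. -/
lemma ennreal_amgm {c : ℝ≥0∞} (hc0 : c ≠ 0) (hct : c ≠ ∞) (x y : ℝ≥0∞) :
    x * y ≤ c * x ^ 2 + c⁻¹ * y ^ 2 := by
  have key := ennreal_mul_le_sq_add_sq (c ^ ((1:ℝ)/2) * x) (c ^ (-(1:ℝ)/2) * y)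
  have h1 : c ^ ((1:ℝ)/2) * x * (c ^ (-(1:ℝ)/2) * y) = x * y := by
    have : c ^ ((1:ℝ)/2) * c ^ (-(1:ℝ)/2) = 1 := by
      rw [← ENNReal.rpow_add _ _ hc0 hct]
      norm_num
    calc c ^ ((1:ℝ)/2) * x * (c ^ (-(1:ℝ)/2) * y)
        = (c ^ ((1:ℝ)/2) * c ^ (-(1:ℝ)/2)) * (x * y) := by ring
      _ = x * y := by rw [this, one_mul]
  have h2 : (c ^ ((1:ℝ)/2) * x) ^ 2 = c * x ^ 2 := by
    rw [mul_pow, ← ENNReal.rpow_natCast (c ^ ((1:ℝ)/2)) 2, ← ENNReal.rpow_mul]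
    norm_num
  have h3 : (c ^ (-(1:ℝ)/2) * y) ^ 2 = c⁻¹ * y ^ 2 := by
    rw [mul_pow, ← ENNReal.rpow_natCast (c ^ (-(1:ℝ)/2)) 2, ← ENNReal.rpow_mul]
    norm_num [ENNReal.rpow_neg_one]
  rw [h1, h2, h3] at key
  exact key

/-- Schur test in `ℝ≥0∞`. -/
lemma schur_bound {ι : Type*} (K : ι → ι → ℝ≥0∞) (w : ι → ℝ≥0∞) (S : ℝ≥0∞)
    (hS0 : S ≠ 0) (hw0 : ∀ p, w p ≠ 0) (hwt : ∀ p, w p ≠ ∞)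
    (hsym : ∀ p q, K p q = K q p)
    (hrow : ∀ p, ∑' q, K p q * w q ≤ S * w p)
    (x y : ι → ℝ≥0∞) :
    ∑' P : ι × ι, K P.1 P.2 * x P.1 * y P.2
      ≤ 2 * S * (∑' i, x i ^ 2) ^ ((1:ℝ)/2) * (∑' i, y i ^ 2) ^ ((1:ℝ)/2) := by
  have key : ∀ u v : ι → ℝ≥0∞,
      ∑' P : ι × ι, K P.1 P.2 * u P.1 * v P.2
        ≤ S * ((∑' i, u i ^ 2) + ∑' i, v i ^ 2) := by
    intro u v
    have hpt : ∀ P : ι × ι, K P.1 P.2 * u P.1 * v P.2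
        ≤ K P.1 P.2 * ((w P.2 / w P.1) * u P.1 ^ 2) + K P.1 P.2 * ((w P.2 / w P.1)⁻¹ * v P.2 ^ 2) := by
      intro P
      have hc0 : w P.2 / w P.1 ≠ 0 := by
        simp [ENNReal.div_eq_zero_iff, hw0 P.2, hwt P.1]
      have hct : w P.2 / w P.1 ≠ ∞ := by
        simp [ENNReal.div_eq_top, hw0 P.1, hwt P.2]
      calc K P.1 P.2 * u P.1 * v P.2 = K P.1 P.2 * (u P.1 * v P.2) := by ring
        _ ≤ K P.1 P.2 * ((w P.2 / w P.1) * u P.1 ^ 2 + (w P.2 / w P.1)⁻¹ * v P.2 ^ 2) :=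
            mul_le_mul_right (ennreal_amgm hc0 hct _ _) _
        _ = _ := by rw [mul_add]
    calc ∑' P : ι × ι, K P.1 P.2 * u P.1 * v P.2
        ≤ ∑' P : ι × ι, (K P.1 P.2 * ((w P.2 / w P.1) * u P.1 ^ 2)
            + K P.1 P.2 * ((w P.2 / w P.1)⁻¹ * v P.2 ^ 2)) := ENNReal.tsum_le_tsum hpt
      _ = (∑' P : ι × ι, K P.1 P.2 * ((w P.2 / w P.1) * u P.1 ^ 2))
            + ∑' P : ι × ι, K P.1 P.2 * ((w P.2 / w P.1)⁻¹ * v P.2 ^ 2) := ENNReal.tsum_add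
      _ ≤ S * (∑' i, u i ^ 2) + S * (∑' i, v i ^ 2) := by
          gcongr
          · -- first term
            rw [ENNReal.tsum_prod']
            calc ∑' (p : ι) (q : ι), K p q * ((w q / w p) * u p ^ 2)
                = ∑' p : ι, (u p ^ 2 * (w p)⁻¹) * ∑' q : ι, K p q * w q := by
                  congr 1; funext p
                  rw [← ENNReal.tsum_mul_left]
                  congr 1; funext q
                  rw [ENNReal.div_eq_inv_mul]
                  ring
              _ ≤ ∑' p : ι, (u p ^ 2 * (w p)⁻¹) * (S * w p) := by
                  exact ENNReal.tsum_le_tsum fun p => mul_le_mul_right (hrow p) _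
              _ = ∑' p : ι, S * u p ^ 2 := by
                  congr 1; funext p
                  rw [show (u p ^ 2 * (w p)⁻¹) * (S * w p) = S * u p ^ 2 * ((w p)⁻¹ * w p) by ring,
                    ENNReal.inv_mul_cancel (hw0 p) (hwt p), mul_one]
              _ = S * ∑' i, u i ^ 2 := ENNReal.tsum_mul_left
          · -- second term
            rw [ENNReal.tsum_prod']
            calc ∑' (p : ι) (q : ι), K p q * ((w q / w p)⁻¹ * v q ^ 2)
                = ∑' (q : ι) (p : ι), K p q * ((w q / w p)⁻¹ * v q ^ 2) := ENNReal.tsum_comm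
              _ = ∑' q : ι, (v q ^ 2 * (w q)⁻¹) * ∑' p : ι, K q p * w p := by
                  congr 1; funext q
                  rw [← ENNReal.tsum_mul_left]
                  congr 1; funext p
                  rw [hsym p q, ENNReal.inv_div (Or.inl (hwt p)) (Or.inl (hw0 p)),
                    ENNReal.div_eq_inv_mul]
                  ring
              _ ≤ ∑' q : ι, (v q ^ 2 * (w q)⁻¹) * (S * w q) :=
                  ENNReal.tsum_le_tsum fun q => mul_le_mul_right (hrow q) _
              _ = ∑' q : ι, S * v q ^ 2 := by
                  congr 1; funext q
                  rw [show (v q ^ 2 * (w q)⁻¹) * (S * w q) = S * v q ^ 2 * ((w q)⁻¹ * w q) by ring,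
                    ENNReal.inv_mul_cancel (hw0 q) (hwt q), mul_one]
              _ = S * ∑' i, v i ^ 2 := ENNReal.tsum_mul_left
      _ = S * ((∑' i, u i ^ 2) + ∑' i, v i ^ 2) := (mul_add _ _ _).symm
  set T := ∑' i, x i ^ 2 with hT
  set U := ∑' i, y i ^ 2 with hU
  have hzero : ∀ u v : ι → ℝ≥0∞, (∀ i, u i = 0 ∨ ∀ i, v i = 0) → True := fun _ _ _ => trivial
  rcases eq_or_ne T 0 with hT0 | hT0
  · have hx : ∀ i, x i = 0 := fun i =>
      pow_eq_zero_iff two_ne_zero |>.mp (ENNReal.tsum_eq_zero.mp (hT ▸ hT0) i)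
    have h0 : ∑' P : ι × ι, K P.1 P.2 * x P.1 * y P.2 = 0 := by
      rw [ENNReal.tsum_eq_zero]
      intro P; rw [hx P.1, mul_zero, zero_mul]
    rw [h0]; exact zero_le
  rcases eq_or_ne U 0 with hU0 | hU0
  · have hy : ∀ i, y i = 0 := fun i =>
      pow_eq_zero_iff two_ne_zero |>.mp (ENNReal.tsum_eq_zero.mp (hU ▸ hU0) i)
    have h0 : ∑' P : ι × ι, K P.1 P.2 * x P.1 * y P.2 = 0 := by
      rw [ENNReal.tsum_eq_zero]
      intro P; rw [hy P.2, mul_zero]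
    rw [h0]; exact zero_le
  rcases eq_or_ne T ∞ with hTt | hTt
  · have : 2 * S * T ^ ((1:ℝ)/2) * U ^ ((1:ℝ)/2) = ⊤ := by
      rw [hTt, ENNReal.top_rpow_of_pos (by norm_num)]
      rw [ENNReal.mul_top (by exact mul_ne_zero two_ne_zero hS0)]
      rw [ENNReal.top_mul (by simp [ENNReal.rpow_eq_zero_iff, hU0])]
    rw [this]; exact le_top
  rcases eq_or_ne U ∞ with hUt | hUt
  · have : 2 * S * T ^ ((1:ℝ)/2) * U ^ ((1:ℝ)/2) = ⊤ := by
      rw [hUt, ENNReal.top_rpow_of_pos (by norm_num)]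
      rw [ENNReal.mul_top (by
        refine mul_ne_zero (mul_ne_zero two_ne_zero hS0) ?_
        simp [ENNReal.rpow_eq_zero_iff, hT0, hTt])]
    rw [this]; exact le_top
  -- main case
  set c₁ := U ^ ((1:ℝ)/4) * T ^ (-(1:ℝ)/4) with hc₁
  set c₂ := T ^ ((1:ℝ)/4) * U ^ (-(1:ℝ)/4) with hc₂
  have h1 : T ^ (-(1:ℝ)/4) * T ^ ((1:ℝ)/4) = 1 := by
    rw [← ENNReal.rpow_add _ _ hT0 hTt]; norm_num
  have h2 : U ^ ((1:ℝ)/4) * U ^ (-(1:ℝ)/4) = 1 := by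
    rw [← ENNReal.rpow_add _ _ hU0 hUt]; norm_num
  have hc : c₁ * c₂ = 1 := by
    calc c₁ * c₂ = (U ^ ((1:ℝ)/4) * U ^ (-(1:ℝ)/4)) * (T ^ (-(1:ℝ)/4) * T ^ ((1:ℝ)/4)) := by
          rw [hc₁, hc₂]; ring
      _ = 1 := by rw [h1, h2, mul_one]
  have sq1 : c₁ ^ 2 * T = T ^ ((1:ℝ)/2) * U ^ ((1:ℝ)/2) := by
    have : c₁ ^ 2 = U ^ ((1:ℝ)/2) * T ^ (-(1:ℝ)/2) := by
      rw [hc₁, mul_pow, ← ENNReal.rpow_natCast (U ^ ((1:ℝ)/4)) 2,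
        ← ENNReal.rpow_natCast (T ^ (-(1:ℝ)/4)) 2, ← ENNReal.rpow_mul, ← ENNReal.rpow_mul]
      norm_num
    have hT12 : T ^ (-(1:ℝ)/2) * T = T ^ ((1:ℝ)/2) := by
      nth_rewrite 2 [← ENNReal.rpow_one T]
      rw [← ENNReal.rpow_add _ _ hT0 hTt]; norm_num
    rw [this, mul_assoc, hT12, mul_comm]
  have sq2 : c₂ ^ 2 * U = T ^ ((1:ℝ)/2) * U ^ ((1:ℝ)/2) := by
    have : c₂ ^ 2 = T ^ ((1:ℝ)/2) * U ^ (-(1:ℝ)/2) := by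
      rw [hc₂, mul_pow, ← ENNReal.rpow_natCast (T ^ ((1:ℝ)/4)) 2,
        ← ENNReal.rpow_natCast (U ^ (-(1:ℝ)/4)) 2, ← ENNReal.rpow_mul, ← ENNReal.rpow_mul]
      norm_num
    have hU12 : U ^ (-(1:ℝ)/2) * U = U ^ ((1:ℝ)/2) := by
      nth_rewrite 2 [← ENNReal.rpow_one U]
      rw [← ENNReal.rpow_add _ _ hU0 hUt]; norm_num
    rw [this, mul_assoc, hU12]
  have hrw : ∀ P : ι × ι, K P.1 P.2 * x P.1 * y P.2
      = K P.1 P.2 * (c₁ * x P.1) * (c₂ * y P.2) := by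
    intro P
    calc K P.1 P.2 * x P.1 * y P.2 = (c₁ * c₂) * (K P.1 P.2 * x P.1 * y P.2) := by
          rw [hc, one_mul]
      _ = _ := by ring
  calc ∑' P : ι × ι, K P.1 P.2 * x P.1 * y P.2
      = ∑' P : ι × ι, K P.1 P.2 * (c₁ * x P.1) * (c₂ * y P.2) := tsum_congr hrw
    _ ≤ S * ((∑' i, (c₁ * x i) ^ 2) + ∑' i, (c₂ * y i) ^ 2) := key _ _
    _ = S * (c₁ ^ 2 * T + c₂ ^ 2 * U) := by
        congr 2
        · rw [hT]
          rw [← ENNReal.tsum_mul_left]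
          exact tsum_congr fun i => mul_pow _ _ _
        · rw [hU]
          rw [← ENNReal.tsum_mul_left]
          exact tsum_congr fun i => mul_pow _ _ _
    _ = 2 * S * T ^ ((1:ℝ)/2) * U ^ ((1:ℝ)/2) := by rw [sq1, sq2]; ring

end tsum
/-! ### Step A : kernel bound -/

lemma Amat_nonneg {n : ℕ} (α : ℝ) (p q : Idx n) : 0 ≤ Amat n α p q := by
  have hp := (sideLen_pos p).le
  have hq := (sideLen_pos q).le
  have hD := (Dquant_pos p q).le
  unfold Amat
  positivity

lemma Amat_le {n : ℕ} (hn : 1 ≤ n) {α : ℝ} (hα : 0 < α) (p q : Idx n) :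
    Amat n α p q ≤ 2 ^ ((n:ℝ)+α) * (sideLen p ^ (((n:ℝ)+α)/2) * sideLen q ^ (((n:ℝ)+α)/2)
      * ∏ i : Fin n, (sideLen p + sideLen q
          + |(p.2 i : ℝ) * 2 ^ p.1 - (q.2 i : ℝ) * 2 ^ q.1|) ^ (-(((n:ℝ)+α)/n))) := by
  have hp := sideLen_pos p
  have hq := sideLen_pos q
  have hD := Dquant_pos p q
  have hnR : (0:ℝ) < n := by exact_mod_cast hn
  set R := sideLen p + sideLen q with hR
  have hRpos : 0 < R := by rw [hR]; linarith
  set Δ := fun i : Fin n => (p.2 i : ℝ) * 2 ^ p.1 - (q.2 i : ℝ) * 2 ^ q.1 with hΔ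
  have hfac : ∀ i : Fin n, 0 < R + |Δ i| := fun i => by positivity
  -- rewrite the numerator
  have e1p : (sideLen p ^ ((n:ℝ))) ^ ((1:ℝ)/2) = sideLen p ^ ((n:ℝ)/2) := by
    rw [← Real.rpow_mul hp.le]; congr 1; ring
  have e1q : (sideLen q ^ ((n:ℝ))) ^ ((1:ℝ)/2) = sideLen q ^ ((n:ℝ)/2) := by
    rw [← Real.rpow_mul hq.le]; congr 1; ring
  have e2p : sideLen p ^ (α/2) * sideLen p ^ ((n:ℝ)/2) = sideLen p ^ (((n:ℝ)+α)/2) := by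
    rw [← Real.rpow_add hp]; congr 1; ring
  have e2q : sideLen q ^ (α/2) * sideLen q ^ ((n:ℝ)/2) = sideLen q ^ (((n:ℝ)+α)/2) := by
    rw [← Real.rpow_add hq]; congr 1; ring
  have hnum : Amat n α p q
      = sideLen p ^ (((n:ℝ)+α)/2) * sideLen q ^ (((n:ℝ)+α)/2)
          * (Dquant n p q ^ ((n:ℝ)+α))⁻¹ := by
    unfold Amat
    rw [e1p, e1q, ← e2p, ← e2q]
    ring
  -- bound on the inverse of the denominator
  have hprodpos : 0 < ∏ i : Fin n, (R + |Δ i|) :=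
    Finset.prod_pos fun i _ => hfac i
  have hprod : ∏ i : Fin n, (R + |Δ i|) ≤ (2 * Dquant n p q) ^ n := by
    calc ∏ i : Fin n, (R + |Δ i|) ≤ ∏ _i : Fin n, (2 * Dquant n p q) :=
          Finset.prod_le_prod (fun i _ => (hfac i).le) (fun i _ => R_add_abs_le p q i)
      _ = (2 * Dquant n p q) ^ n := by
          rw [Finset.prod_const, Finset.card_univ, Fintype.card_fin]
  have h2 : (∏ i : Fin n, (R + |Δ i|)) ^ (((n:ℝ)+α)/n)
      ≤ 2 ^ ((n:ℝ)+α) * Dquant n p q ^ ((n:ℝ)+α) := by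
    calc (∏ i : Fin n, (R + |Δ i|)) ^ (((n:ℝ)+α)/n)
        ≤ ((2 * Dquant n p q) ^ n) ^ (((n:ℝ)+α)/n) :=
          Real.rpow_le_rpow hprodpos.le hprod (by positivity)
      _ = (2 * Dquant n p q) ^ ((n:ℝ)+α) := by
          rw [← Real.rpow_natCast (2 * Dquant n p q) n, ← Real.rpow_mul (by linarith)]
          congr 1; field_simp
      _ = 2 ^ ((n:ℝ)+α) * Dquant n p q ^ ((n:ℝ)+α) := Real.mul_rpow (by norm_num) hD.le
  have h3 : ∏ i : Fin n, (R + |Δ i|) ^ (-(((n:ℝ)+α)/n))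
      = ((∏ i : Fin n, (R + |Δ i|)) ^ (((n:ℝ)+α)/n))⁻¹ := by
    rw [← Real.rpow_neg hprodpos.le,
      ← Real.finset_prod_rpow _ _ (fun i _ => (hfac i).le) _]
  have h4 : (Dquant n p q ^ ((n:ℝ)+α))⁻¹
      ≤ 2 ^ ((n:ℝ)+α) * ∏ i : Fin n, (R + |Δ i|) ^ (-(((n:ℝ)+α)/n)) := by
    rw [h3]
    have hPpos : 0 < (∏ i : Fin n, (R + |Δ i|)) ^ (((n:ℝ)+α)/n) :=
      Real.rpow_pos_of_pos hprodpos _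
    have h2pos : (0:ℝ) < 2 ^ ((n:ℝ)+α) := Real.rpow_pos_of_pos two_pos _
    have hDE : (0:ℝ) < Dquant n p q ^ ((n:ℝ)+α) := Real.rpow_pos_of_pos hD _
    have hinv : (2 ^ ((n:ℝ)+α) * Dquant n p q ^ ((n:ℝ)+α))⁻¹
        ≤ ((∏ i : Fin n, (R + |Δ i|)) ^ (((n:ℝ)+α)/n))⁻¹ := by
      gcongr
    calc (Dquant n p q ^ ((n:ℝ)+α))⁻¹
        = 2 ^ ((n:ℝ)+α) * (2 ^ ((n:ℝ)+α) * Dquant n p q ^ ((n:ℝ)+α))⁻¹ := by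
          rw [mul_inv]
          rw [← mul_assoc, mul_inv_cancel₀ (ne_of_gt h2pos), one_mul]
      _ ≤ _ := mul_le_mul_of_nonneg_left hinv h2pos.le
  rw [hnum]
  calc sideLen p ^ (((n:ℝ)+α)/2) * sideLen q ^ (((n:ℝ)+α)/2) * (Dquant n p q ^ ((n:ℝ)+α))⁻¹
      ≤ sideLen p ^ (((n:ℝ)+α)/2) * sideLen q ^ (((n:ℝ)+α)/2)
        * (2 ^ ((n:ℝ)+α) * ∏ i : Fin n, (R + |Δ i|) ^ (-(((n:ℝ)+α)/n))) := by
        refine mul_le_mul_of_nonneg_left h4 (by positivity)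
    _ = _ := by ring

/-! ### one-dimensional lattice sums -/

def Zc (γ : ℝ) : ℝ≥0∞ := ∑' z : ℤ, ENNReal.ofReal ((max |(z:ℝ)| 1) ^ (-γ))

def Zg (r : ℝ) : ℝ≥0∞ := ∑' d : ℤ, ENNReal.ofReal ((2:ℝ) ^ (-(r * |(d:ℝ)|)))

lemma Zc_lt_top {γ : ℝ} (hγ : 1 < γ) : Zc γ < ∞ := by
  have hγ0 : 0 < γ := lt_trans one_pos hγ
  have hsum : Summable (fun m : ℕ => ((m:ℝ) ^ γ)⁻¹) := Real.summable_nat_rpow_inv.mpr hγ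
  have h1 : Summable (fun m : ℕ => ((m:ℝ)) ^ (-γ)) := by
    refine hsum.congr fun m => ?_
    rw [Real.rpow_neg (Nat.cast_nonneg m)]
  have h2 : Summable (fun m : ℕ => (max (m:ℝ) 1) ^ (-γ)) := by
    rw [← summable_nat_add_iff 1] at h1 ⊢
    refine h1.congr fun m => ?_
    congr 1
    rw [eq_comm, max_eq_left (by push_cast; linarith)]
  have hnn : ∀ m : ℕ, 0 ≤ (max (m:ℝ) 1) ^ (-γ) := fun m => Real.rpow_nonneg (by positivity) _
  unfold Zc
  rw [← tsum_nat_add_neg_add_one ENNReal.summable]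
  have hle : ∀ m : ℕ,
      ENNReal.ofReal ((max |((m:ℤ):ℝ)| 1) ^ (-γ)) + ENNReal.ofReal ((max |((-(m+1) : ℤ):ℝ)| 1) ^ (-γ))
        ≤ 2 * ENNReal.ofReal ((max (m:ℝ) 1) ^ (-γ)) := by
    intro m
    have e1 : |((m:ℤ):ℝ)| = (m:ℝ) := by
      push_cast; exact abs_of_nonneg (Nat.cast_nonneg m)
    have e2 : |((-(m+1) : ℤ):ℝ)| = (m:ℝ) + 1 := by
      push_cast; rw [abs_neg, abs_of_nonneg (by positivity)]
    rw [e1, e2, two_mul]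
    refine add_le_add le_rfl (ENNReal.ofReal_le_ofReal ?_)
    apply Real.rpow_le_rpow_of_nonpos (by positivity)
      (max_le_max (by linarith) le_rfl) (by linarith)
  calc ∑' m : ℕ, (ENNReal.ofReal ((max |((m:ℤ):ℝ)| 1) ^ (-γ))
          + ENNReal.ofReal ((max |((-(m+1) : ℤ):ℝ)| 1) ^ (-γ)))
      ≤ ∑' m : ℕ, 2 * ENNReal.ofReal ((max (m:ℝ) 1) ^ (-γ)) := ENNReal.tsum_le_tsum hle
    _ = 2 * ∑' m : ℕ, ENNReal.ofReal ((max (m:ℝ) 1) ^ (-γ)) := ENNReal.tsum_mul_left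
    _ = 2 * ENNReal.ofReal (∑' m : ℕ, (max (m:ℝ) 1) ^ (-γ)) := by
        rw [ENNReal.ofReal_tsum_of_nonneg hnn h2]
    _ < ∞ := by
        exact ENNReal.mul_lt_top (by norm_num) ENNReal.ofReal_lt_top

lemma Zg_lt_top {r : ℝ} (hr : 0 < r) : Zg r < ∞ := by
  set ρ : ℝ := (2:ℝ) ^ (-r) with hρ
  have hρ0 : 0 ≤ ρ := Real.rpow_nonneg (by norm_num) _
  have hρ1 : ρ < 1 := Real.rpow_lt_one_of_one_lt_of_neg one_lt_two (by linarith)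
  have hgeom : Summable (fun m : ℕ => ρ ^ m) := summable_geometric_of_lt_one hρ0 hρ1
  have hpow : ∀ m : ℕ, (2:ℝ) ^ (-(r * (m:ℝ))) = ρ ^ m := by
    intro m
    rw [hρ, ← Real.rpow_natCast ((2:ℝ) ^ (-r)) m, ← Real.rpow_mul (by norm_num)]
    congr 1; ring
  unfold Zg
  rw [← tsum_nat_add_neg_add_one ENNReal.summable]
  have hle : ∀ m : ℕ,
      ENNReal.ofReal ((2:ℝ) ^ (-(r * |((m:ℤ):ℝ)|))) + ENNReal.ofReal ((2:ℝ) ^ (-(r * |((-(m+1) : ℤ):ℝ)|)))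
        ≤ 2 * ENNReal.ofReal (ρ ^ m) := by
    intro m
    have e1 : |((m:ℤ):ℝ)| = (m:ℝ) := by push_cast; exact abs_of_nonneg (Nat.cast_nonneg m)
    have e2 : |((-(m+1) : ℤ):ℝ)| = (m:ℝ) + 1 := by
      push_cast; rw [abs_neg, abs_of_nonneg (by positivity)]
    rw [e1, e2, two_mul]
    refine add_le_add (ENNReal.ofReal_le_ofReal (le_of_eq (hpow m)))
      (ENNReal.ofReal_le_ofReal ?_)
    rw [← hpow m]
    apply Real.rpow_le_rpow_of_exponent_le one_le_two
    nlinarith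
  calc ∑' m : ℕ, (ENNReal.ofReal ((2:ℝ) ^ (-(r * |((m:ℤ):ℝ)|)))
          + ENNReal.ofReal ((2:ℝ) ^ (-(r * |((-(m+1) : ℤ):ℝ)|))))
      ≤ ∑' m : ℕ, 2 * ENNReal.ofReal (ρ ^ m) := ENNReal.tsum_le_tsum hle
    _ = 2 * ∑' m : ℕ, ENNReal.ofReal (ρ ^ m) := ENNReal.tsum_mul_left
    _ = 2 * ENNReal.ofReal (∑' m : ℕ, ρ ^ m) := by
        rw [ENNReal.ofReal_tsum_of_nonneg (fun m => pow_nonneg hρ0 m) hgeom]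
    _ < ∞ := ENNReal.mul_lt_top (by norm_num) ENNReal.ofReal_lt_top

lemma one_dim_sum {δ γ : ℝ} (hδ : 0 < δ) (hγ0 : 0 < γ) {h R : ℝ} (hh : 0 < h) (hhR : h ≤ R)
    (c : ℝ) :
    ∑' z : ℤ, ENNReal.ofReal ((R + |c - (z:ℝ) * h|) ^ (-(δ + γ)))
      ≤ ENNReal.ofReal (R ^ (-δ) * h ^ (-γ)) * Zc γ := by
  have hR : 0 < R := lt_of_lt_of_le hh hhR
  set z₀ : ℤ := ⌊c / h⌋ with hz₀
  have hpt : ∀ z : ℤ, (R + |c - (z:ℝ) * h|) ^ (-(δ + γ))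
      ≤ R ^ (-δ) * h ^ (-γ) * (max |((z - z₀ : ℤ):ℝ)| 1) ^ (-γ) := by
    intro z
    set M := max |((z - z₀ : ℤ):ℝ)| 1 with hM
    have hM1 : (1:ℝ) ≤ M := le_max_right _ _
    have hMpos : (0:ℝ) < M := lt_of_lt_of_le one_pos hM1
    have habs : (0:ℝ) ≤ |c - (z:ℝ) * h| := abs_nonneg _
    have hbase : 0 < R + |c - (z:ℝ) * h| := by positivity
    have hub : h * M ≤ R + |c - (z:ℝ) * h| := by
      rcases le_or_gt |((z - z₀ : ℤ):ℝ)| 1 with hcase | hcase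
      · rw [hM, max_eq_right hcase]
        linarith
      · rw [hM, max_eq_left hcase.le]
        have floor1 : (z₀:ℝ) ≤ c / h := Int.floor_le _
        have floor2 : c / h < z₀ + 1 := Int.lt_floor_add_one _
        have e : c - (z:ℝ) * h = h * (c / h - z) := by field_simp
        have e2 : |c - (z:ℝ) * h| = h * |c / h - (z:ℝ)| := by
          rw [e, abs_mul, abs_of_pos hh]
        have t1 : |((z - z₀ : ℤ):ℝ)| ≤ |(z:ℝ) - c/h| + |c/h - (z₀:ℝ)| := by
          push_cast
          exact abs_sub_le _ _ _
        have t2 : |c/h - (z₀:ℝ)| ≤ 1 := by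
          rw [abs_of_nonneg (by linarith)]; linarith
        have t3 : |(z:ℝ) - c/h| = |c/h - (z:ℝ)| := abs_sub_comm _ _
        have t4 : |((z - z₀ : ℤ):ℝ)| - 1 ≤ |c / h - (z:ℝ)| := by
          rw [← t3]; linarith
        have t5 : h * (|((z - z₀ : ℤ):ℝ)| - 1) ≤ h * |c / h - (z:ℝ)| :=
          mul_le_mul_of_nonneg_left t4 hh.le
        rw [e2] at *
        nlinarith
    have split : (R + |c - (z:ℝ) * h|) ^ (-(δ + γ))
        = (R + |c - (z:ℝ) * h|) ^ (-δ) * (R + |c - (z:ℝ) * h|) ^ (-γ) := by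
      rw [← Real.rpow_add hbase]; congr 1; ring
    rw [split]
    have b1 : (R + |c - (z:ℝ) * h|) ^ (-δ) ≤ R ^ (-δ) :=
      Real.rpow_le_rpow_of_nonpos hR (by linarith) (by linarith)
    have b2 : (R + |c - (z:ℝ) * h|) ^ (-γ) ≤ h ^ (-γ) * M ^ (-γ) := by
      rw [← Real.mul_rpow hh.le hMpos.le]
      exact Real.rpow_le_rpow_of_nonpos (by positivity) hub (by linarith)
    calc (R + |c - (z:ℝ) * h|) ^ (-δ) * (R + |c - (z:ℝ) * h|) ^ (-γ)
        ≤ R ^ (-δ) * (h ^ (-γ) * M ^ (-γ)) := by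
          apply mul_le_mul b1 b2 (Real.rpow_nonneg hbase.le _) (Real.rpow_nonneg hR.le _)
      _ = R ^ (-δ) * h ^ (-γ) * M ^ (-γ) := by ring
  calc ∑' z : ℤ, ENNReal.ofReal ((R + |c - (z:ℝ) * h|) ^ (-(δ + γ)))
      ≤ ∑' z : ℤ, ENNReal.ofReal (R ^ (-δ) * h ^ (-γ))
          * ENNReal.ofReal ((max |((z - z₀ : ℤ):ℝ)| 1) ^ (-γ)) := by
        apply ENNReal.tsum_le_tsum
        intro z
        rw [← ENNReal.ofReal_mul (by positivity)]
        exact ENNReal.ofReal_le_ofReal (hpt z)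
    _ = ENNReal.ofReal (R ^ (-δ) * h ^ (-γ))
          * ∑' z : ℤ, ENNReal.ofReal ((max |((z - z₀ : ℤ):ℝ)| 1) ^ (-γ)) := ENNReal.tsum_mul_left
    _ = ENNReal.ofReal (R ^ (-δ) * h ^ (-γ)) * Zc γ := by
        congr 1
        have := (Equiv.subRight z₀).tsum_eq
          (fun w : ℤ => ENNReal.ofReal ((max |((w : ℤ):ℝ)| 1) ^ (-γ)))
        unfold Zc
        rw [← this]
        rfl

/-! ### per-scale algebra -/

lemma scale_bound {n : ℕ} (hn : 1 ≤ n) {α : ℝ} (hα : 0 < α) (j k : ℤ) :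
    2 ^ ((n:ℝ)+α) * ((2:ℝ)^j) ^ (((n:ℝ)+α)/2)
      * (((2:ℝ)^k) ^ (((n:ℝ)+α)/2) * ((2:ℝ)^k) ^ ((n:ℝ)/2))
      * ((((2:ℝ)^j + (2:ℝ)^k) ^ (-(3*α/(4*(n:ℝ)))) * ((2:ℝ)^k) ^ (-(1 + α/(4*(n:ℝ))))) ^ n)
    ≤ 2 ^ ((n:ℝ)+α) * ((2:ℝ)^j) ^ ((n:ℝ)/2) * (2:ℝ) ^ (-(α/4) * |(k:ℝ) - (j:ℝ)|) := by
  have hN : (0:ℝ) < (n:ℝ) := by exact_mod_cast hn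
  have h2 : (0:ℝ) ≤ 2 := by norm_num
  have hj : (2:ℝ)^j = (2:ℝ)^((j:ℝ)) := (Real.rpow_intCast 2 j).symm
  have hk : (2:ℝ)^k = (2:ℝ)^((k:ℝ)) := (Real.rpow_intCast 2 k).symm
  rw [hj, hk]
  set N := (n:ℝ) with hNd
  set A := (2:ℝ)^((j:ℝ)) with hA
  set B := (2:ℝ)^((k:ℝ)) with hB
  have hApos : 0 < A := Real.rpow_pos_of_pos two_pos _
  have hBpos : 0 < B := Real.rpow_pos_of_pos two_pos _
  have hRpos : 0 < A + B := by linarith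
  have powA : ∀ E : ℝ, A ^ E = (2:ℝ) ^ ((j:ℝ) * E) := fun E => by
    rw [hA, ← Real.rpow_mul h2]
  have powB : ∀ E : ℝ, B ^ E = (2:ℝ) ^ ((k:ℝ) * E) := fun E => by
    rw [hB, ← Real.rpow_mul h2]
  have e1 : (((A+B) ^ (-(3*α/(4*N))) * B ^ (-(1 + α/(4*N)))) ^ n)
      = (A+B) ^ (-(3*α/4)) * B ^ (-(N + α/4)) := by
    rw [mul_pow, ← Real.rpow_natCast ((A+B) ^ (-(3*α/(4*N)))) n,
      ← Real.rpow_natCast (B ^ (-(1 + α/(4*N)))) n,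
      ← Real.rpow_mul hRpos.le, ← Real.rpow_mul hBpos.le]
    rw [← hNd]
    congr 2
    · field_simp
    · field_simp
  rw [e1]
  have e2 : B ^ ((N+α)/2) * B ^ (N/2) * B ^ (-(N + α/4)) = B ^ (α/4) := by
    rw [← Real.rpow_add hBpos, ← Real.rpow_add hBpos]; congr 1; ring
  have e3 : 2 ^ (N+α) * A ^ ((N+α)/2) * (B ^ ((N+α)/2) * B ^ (N/2))
        * ((A+B) ^ (-(3*α/4)) * B ^ (-(N + α/4)))
      = 2 ^ (N+α) * (A ^ ((N+α)/2) * (B ^ ((N+α)/2) * B ^ (N/2) * B ^ (-(N + α/4)))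
        * (A+B) ^ (-(3*α/4))) := by ring
  rw [e3, e2]
  have key : A ^ ((N+α)/2) * B ^ (α/4) * (A+B) ^ (-(3*α/4))
      ≤ A ^ (N/2) * (2:ℝ) ^ (-(α/4) * |(k:ℝ) - (j:ℝ)|) := by
    have rhs : A ^ (N/2) * (2:ℝ) ^ (-(α/4) * |(k:ℝ) - (j:ℝ)|)
        = 2 ^ ((j:ℝ) * (N/2) + -(α/4) * |(k:ℝ) - (j:ℝ)|) := by
      rw [powA, Real.rpow_add two_pos]
    rcases le_total k j with hkj | hkj
    · have hkjR : (k:ℝ) ≤ (j:ℝ) := by exact_mod_cast hkj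
      have habs : |(k:ℝ) - (j:ℝ)| = (j:ℝ) - (k:ℝ) := by
        rw [abs_of_nonpos (by linarith)]; ring
      calc A ^ ((N+α)/2) * B ^ (α/4) * (A+B) ^ (-(3*α/4))
          ≤ A ^ ((N+α)/2) * B ^ (α/4) * A ^ (-(3*α/4)) := by
            refine mul_le_mul_of_nonneg_left
              (Real.rpow_le_rpow_of_nonpos hApos (by linarith) (by nlinarith)) (by positivity)
        _ = 2 ^ ((j:ℝ) * ((N+α)/2) + ((k:ℝ) * (α/4) + (j:ℝ) * (-(3*α/4)))) := by
            rw [powA, powB, powA, Real.rpow_add two_pos, Real.rpow_add two_pos]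
            ring
        _ ≤ A ^ (N/2) * (2:ℝ) ^ (-(α/4) * |(k:ℝ) - (j:ℝ)|) := by
            rw [rhs, habs]
            apply Real.rpow_le_rpow_of_exponent_le one_le_two
            ring_nf
            nlinarith
    · have hkjR : (j:ℝ) ≤ (k:ℝ) := by exact_mod_cast hkj
      have habs : |(k:ℝ) - (j:ℝ)| = (k:ℝ) - (j:ℝ) := abs_of_nonneg (by linarith)
      calc A ^ ((N+α)/2) * B ^ (α/4) * (A+B) ^ (-(3*α/4))
          ≤ A ^ ((N+α)/2) * B ^ (α/4) * B ^ (-(3*α/4)) := by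
            refine mul_le_mul_of_nonneg_left
              (Real.rpow_le_rpow_of_nonpos hBpos (by linarith) (by nlinarith)) (by positivity)
        _ = 2 ^ ((j:ℝ) * ((N+α)/2) + ((k:ℝ) * (α/4) + (k:ℝ) * (-(3*α/4)))) := by
            rw [powA, powB, powB, Real.rpow_add two_pos, Real.rpow_add two_pos]
            ring
        _ ≤ A ^ (N/2) * (2:ℝ) ^ (-(α/4) * |(k:ℝ) - (j:ℝ)|) := by
            rw [rhs, habs]
            apply Real.rpow_le_rpow_of_exponent_le one_le_two
            nlinarith [mul_nonneg (sub_nonneg.2 hkjR) hα.le]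
  calc 2 ^ (N+α) * (A ^ ((N+α)/2) * B ^ (α/4) * (A+B) ^ (-(3*α/4)))
      ≤ 2 ^ (N+α) * (A ^ (N/2) * (2:ℝ) ^ (-(α/4) * |(k:ℝ) - (j:ℝ)|)) :=
        mul_le_mul_of_nonneg_left key (by positivity)
    _ = _ := by ring

/-! ### symmetry and weights -/

lemma setDist_comm {X : Type*} [PseudoMetricSpace X] (A B : Set X) :
    setDist A B = setDist B A := by
  unfold setDist
  rw [Set.image2_swap]
  simp_rw [dist_comm]

lemma Dquant_comm {n : ℕ} (p q : Idx n) : Dquant n p q = Dquant n q p := by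
  unfold Dquant
  rw [setDist_comm]
  ring

lemma Amat_comm {n : ℕ} (α : ℝ) (p q : Idx n) : Amat n α p q = Amat n α q p := by
  unfold Amat
  rw [Dquant_comm]
  ring

def wgt (n : ℕ) (p : Idx n) : ℝ≥0∞ := ENNReal.ofReal (sideLen p ^ ((n:ℝ)/2))

lemma wgt_ne_zero {n : ℕ} (p : Idx n) : wgt n p ≠ 0 := by
  unfold wgt
  simp only [ne_eq, ENNReal.ofReal_eq_zero, not_le]
  exact Real.rpow_pos_of_pos (sideLen_pos p) _

lemma wgt_ne_top {n : ℕ} (p : Idx n) : wgt n p ≠ ∞ := ENNReal.ofReal_ne_top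

/-! ### the row bound -/

lemma row_bound {n : ℕ} (hn : 1 ≤ n) {α : ℝ} (hα : 0 < α) :
    ∃ S : ℝ≥0∞, S ≠ ∞ ∧ ∀ p : Idx n,
      ∑' q : Idx n, ENNReal.ofReal (Amat n α p q) * wgt n q ≤ S * wgt n p := by
  have hN : (0:ℝ) < (n:ℝ) := by exact_mod_cast hn
  set γ : ℝ := 1 + α/(4*(n:ℝ)) with hγdef
  set δ : ℝ := 3*α/(4*(n:ℝ)) with hδdef
  have hγ1 : 1 < γ := by
    rw [hγdef]; nlinarith [div_pos hα (by linarith : (0:ℝ) < 4*(n:ℝ))]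
  have hγ0 : 0 < γ := lt_trans one_pos hγ1
  have hδ0 : 0 < δ := by rw [hδdef]; positivity
  have hβ : -(((n:ℝ)+α)/(n:ℝ)) = -(δ + γ) := by
    rw [hδdef, hγdef]; field_simp; ring
  refine ⟨ENNReal.ofReal (2 ^ ((n:ℝ)+α)) * (Zc γ)^n * Zg (α/4), ?_, ?_⟩
  · exact ENNReal.mul_ne_top
      (ENNReal.mul_ne_top ENNReal.ofReal_ne_top (ENNReal.pow_ne_top (Zc_lt_top hγ1).ne))
      (Zg_lt_top (by positivity)).ne
  intro p
  set j : ℤ := p.1 with hj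
  have hslp : sideLen p = (2:ℝ)^j := rfl
  have h2j : (0:ℝ) < (2:ℝ)^j := zpow_pos two_pos _
  -- the inner (fixed-scale) estimate
  have inner : ∀ k : ℤ,
      ∑' m : Fin n → ℤ, ENNReal.ofReal (Amat n α p (k, m)) * wgt n (k, m)
        ≤ (Zc γ)^n * (ENNReal.ofReal (2 ^ ((n:ℝ)+α)) * wgt n p
            * ENNReal.ofReal ((2:ℝ) ^ (-(α/4) * |(k:ℝ) - (j:ℝ)|))) := by
    intro k
    have h2k : (0:ℝ) < (2:ℝ)^k := zpow_pos two_pos _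
    have hR0 : (0:ℝ) < (2:ℝ)^j + (2:ℝ)^k := by linarith
    set cR : ℝ := 2 ^ ((n:ℝ)+α) * ((2:ℝ)^j) ^ (((n:ℝ)+α)/2)
      * (((2:ℝ)^k) ^ (((n:ℝ)+α)/2) * ((2:ℝ)^k) ^ ((n:ℝ)/2)) with hcR
    have hcRnn : 0 ≤ cR := by rw [hcR]; positivity
    set g : Fin n → ℤ → ℝ≥0∞ := fun i z =>
      ENNReal.ofReal ((((2:ℝ)^j + (2:ℝ)^k)
        + |(p.2 i : ℝ) * 2 ^ j - (z:ℝ) * 2 ^ k|) ^ (-(δ + γ))) with hg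
    have stepA : ∀ m : Fin n → ℤ,
        ENNReal.ofReal (Amat n α p (k, m)) * wgt n (k, m)
          ≤ ENNReal.ofReal cR * ∏ i : Fin n, g i (m i) := by
      intro m
      have hAle := Amat_le hn hα p (k, m)
      simp only [sideLen, hslp] at hAle
      -- hAle : Amat ≤ 2^(N+α) * ((2^j)^s * (2^k)^s * ∏ (R+|Δ|)^(-β))
      have hwgt : wgt n (k, m) = ENNReal.ofReal (((2:ℝ)^k) ^ ((n:ℝ)/2)) := rfl
      rw [hwgt, ← ENNReal.ofReal_mul (Amat_nonneg α p (k,m))]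
      have hmul : Amat n α p (k, m) * ((2:ℝ)^k) ^ ((n:ℝ)/2)
          ≤ cR * ∏ i : Fin n,
            ((((2:ℝ)^j + (2:ℝ)^k) + |(p.2 i : ℝ) * 2 ^ j - ((m i):ℝ) * 2 ^ k|) ^ (-(δ + γ))) := by
        have hb : 0 ≤ ((2:ℝ)^k) ^ ((n:ℝ)/2) := by positivity
        calc Amat n α p (k, m) * ((2:ℝ)^k) ^ ((n:ℝ)/2)
            ≤ (2 ^ ((n:ℝ)+α) * (((2:ℝ)^j) ^ (((n:ℝ)+α)/2) * ((2:ℝ)^k) ^ (((n:ℝ)+α)/2)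
              * ∏ i : Fin n, (((2:ℝ)^j + (2:ℝ)^k)
                  + |(p.2 i : ℝ) * 2 ^ j - ((m i):ℝ) * 2 ^ k|) ^ (-(((n:ℝ)+α)/(n:ℝ)))))
              * ((2:ℝ)^k) ^ ((n:ℝ)/2) := mul_le_mul_of_nonneg_right hAle hb
          _ = cR * ∏ i : Fin n, (((2:ℝ)^j + (2:ℝ)^k)
                  + |(p.2 i : ℝ) * 2 ^ j - ((m i):ℝ) * 2 ^ k|) ^ (-(δ + γ)) := by
              simp_rw [hβ]
              rw [hcR]; ring
      refine le_trans (ENNReal.ofReal_le_ofReal hmul) ?_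
      rw [ENNReal.ofReal_mul hcRnn, ENNReal.ofReal_prod_of_nonneg
        (fun i _ => Real.rpow_nonneg (by positivity) _)]
    calc ∑' m : Fin n → ℤ, ENNReal.ofReal (Amat n α p (k, m)) * wgt n (k, m)
        ≤ ∑' m : Fin n → ℤ, ENNReal.ofReal cR * ∏ i : Fin n, g i (m i) :=
          ENNReal.tsum_le_tsum stepA
      _ = ENNReal.ofReal cR * ∑' m : Fin n → ℤ, ∏ i : Fin n, g i (m i) :=
          ENNReal.tsum_mul_left
      _ = ENNReal.ofReal cR * ∏ i : Fin n, ∑' z : ℤ, g i z := by rw [tsum_pi_prod]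
      _ ≤ ENNReal.ofReal cR * ∏ _i : Fin n,
            (ENNReal.ofReal (((2:ℝ)^j + (2:ℝ)^k) ^ (-δ) * ((2:ℝ)^k) ^ (-γ)) * Zc γ) := by
          refine mul_le_mul_right (Finset.prod_le_prod' fun i _ => ?_) _
          exact one_dim_sum hδ0 hγ0 h2k (by linarith) _
      _ = ENNReal.ofReal cR
            * ENNReal.ofReal ((((2:ℝ)^j + (2:ℝ)^k) ^ (-δ) * ((2:ℝ)^k) ^ (-γ)) ^ n)
            * (Zc γ)^n := by
          rw [Finset.prod_const, Finset.card_univ, Fintype.card_fin, mul_pow,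
            ENNReal.ofReal_pow (by positivity), mul_assoc]
      _ = ENNReal.ofReal (cR * (((2:ℝ)^j + (2:ℝ)^k) ^ (-δ) * ((2:ℝ)^k) ^ (-γ)) ^ n)
            * (Zc γ)^n := by
          rw [ENNReal.ofReal_mul hcRnn]
      _ ≤ ENNReal.ofReal (2 ^ ((n:ℝ)+α) * ((2:ℝ)^j) ^ ((n:ℝ)/2)
            * (2:ℝ) ^ (-(α/4) * |(k:ℝ) - (j:ℝ)|)) * (Zc γ)^n := by
          refine mul_le_mul_left (ENNReal.ofReal_le_ofReal ?_) _
          rw [hcR]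
          exact scale_bound hn hα j k
      _ = (Zc γ)^n * (ENNReal.ofReal (2 ^ ((n:ℝ)+α)) * wgt n p
            * ENNReal.ofReal ((2:ℝ) ^ (-(α/4) * |(k:ℝ) - (j:ℝ)|))) := by
          rw [ENNReal.ofReal_mul (by positivity), ENNReal.ofReal_mul (by positivity)]
          have : wgt n p = ENNReal.ofReal (((2:ℝ)^j) ^ ((n:ℝ)/2)) := rfl
          rw [this]
          ring
  -- sum over scales
  calc ∑' q : Idx n, ENNReal.ofReal (Amat n α p q) * wgt n q
      = ∑' k : ℤ, ∑' m : Fin n → ℤ, ENNReal.ofReal (Amat n α p (k, m)) * wgt n (k, m) := by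
        exact ENNReal.tsum_prod'
    _ ≤ ∑' k : ℤ, (Zc γ)^n * (ENNReal.ofReal (2 ^ ((n:ℝ)+α)) * wgt n p
          * ENNReal.ofReal ((2:ℝ) ^ (-(α/4) * |(k:ℝ) - (j:ℝ)|))) :=
        ENNReal.tsum_le_tsum inner
    _ = (Zc γ)^n * (ENNReal.ofReal (2 ^ ((n:ℝ)+α)) * wgt n p)
          * ∑' k : ℤ, ENNReal.ofReal ((2:ℝ) ^ (-(α/4) * |(k:ℝ) - (j:ℝ)|)) := by
        rw [← ENNReal.tsum_mul_left]
        congr 1; funext k; ring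
    _ = (Zc γ)^n * (ENNReal.ofReal (2 ^ ((n:ℝ)+α)) * wgt n p) * Zg (α/4) := by
        congr 1
        have e : ∀ k : ℤ, ENNReal.ofReal ((2:ℝ) ^ (-(α/4) * |(k:ℝ) - (j:ℝ)|))
            = (fun d : ℤ => ENNReal.ofReal ((2:ℝ) ^ (-(α/4 * |(d:ℝ)|)))) ((Equiv.subRight j) k) := by
          intro k
          simp only [Equiv.subRight_apply]
          congr 2
          push_cast
          ring
        rw [tsum_congr e]
        exact Equiv.tsum_eq (Equiv.subRight j)
          (fun d : ℤ => ENNReal.ofReal ((2:ℝ) ^ (-(α/4 * |(d:ℝ)|))))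
    _ = (ENNReal.ofReal (2 ^ ((n:ℝ)+α)) * (Zc γ)^n * Zg (α/4)) * wgt n p := by ring

/-- Schur-type bound, Proposition 2.2 of the paper:
for nonnegative sequences indexed by dyadic cubes,
`∑_{I₁,I₂} A_{I₁I₂} x_{I₁} y_{I₂} ≲ (∑ x²)^{1/2} (∑ y²)^{1/2}`,
with implied constant depending only on `n` and `α`. -/
theorem statement0 (n : ℕ) (hn : 1 ≤ n) (α : ℝ) (hα : 0 < α) :
    ∃ C : ℝ, 0 < C ∧ ∀ x y : Idx n → ℝ≥0∞,
      ∑' P : Idx n × Idx n, ENNReal.ofReal (Amat n α P.1 P.2) * x P.1 * y P.2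
        ≤ ENNReal.ofReal C * (∑' I : Idx n, x I ^ 2) ^ ((1 : ℝ) / 2)
            * (∑' I : Idx n, y I ^ 2) ^ ((1 : ℝ) / 2) := by
  obtain ⟨S, hStop, hrow⟩ := row_bound hn hα
  set S' : ℝ≥0∞ := max S 1 with hS'
  have hS'top : S' ≠ ∞ := by
    rw [hS']
    simp [hStop]
  have hS'0 : S' ≠ 0 := by
    have h1 : (1:ℝ≥0∞) ≤ S' := le_max_right _ _
    intro h
    rw [h] at h1
    simp at h1
  have hrow' : ∀ p : Idx n, ∑' q : Idx n, ENNReal.ofReal (Amat n α p q) * wgt n q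
      ≤ S' * wgt n p :=
    fun p => (hrow p).trans (mul_le_mul_left (le_max_left _ _) _)
  refine ⟨(2 * S').toReal + 1, by positivity, ?_⟩
  intro x y
  have hsch := schur_bound (fun p q => ENNReal.ofReal (Amat n α p q)) (wgt n) S' hS'0
    wgt_ne_zero wgt_ne_top (fun p q => by rw [Amat_comm]) hrow' x y
  refine hsch.trans ?_
  have h2S : 2 * S' ≤ ENNReal.ofReal ((2 * S').toReal + 1) := by
    have hfin : 2 * S' ≠ ∞ := ENNReal.mul_ne_top (by norm_num) hS'top
    rw [ENNReal.ofReal_add ENNReal.toReal_nonneg zero_le_one,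
      ENNReal.ofReal_toReal hfin]
    exact le_self_add
  exact mul_le_mul_left (mul_le_mul_left h2S _) _

end
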